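/- arXiv:2001.03744 — 5 statements merged into one kernel-verified Lean document; each statement's English description precedes it below -/
import Mathlib

section
/- Let M be a symmetric 3×3 real matrix (Mᵀ = M). Then the bilinear bracket on ℝ³ defined by [x,y]_M := Mᵀ ·(x ×ᵥ y) satisfies the Jacobi identity: for all x, y, z ∈ ℝ³, [[x,y]_M, z]_M + [[y,z]_M, x]_M + [[z,x]_M, y]_M = 0. (Hence [·,·]_M defines a Lie algebra structure on ℝ³, the class-A deformation of 𝔰𝔬(3).) -/
open Matrix

/-- For a symmetric 3×3 real matrix `M`, the deformed bracket
`[x,y]_M := Mᵀ *ᵥ (x ×ᵥ y)` satisfies the Jacobi identity (class-A deformation of 𝔰𝔬(3)). -/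
theorem classA_deformation_jacobi (M : Matrix (Fin 3) (Fin 3) ℝ) (hM : Mᵀ = M) :
    ∀ x y z : Fin 3 → ℝ,
      Mᵀ *ᵥ (crossProduct (Mᵀ *ᵥ (crossProduct x y)) z)
        + Mᵀ *ᵥ (crossProduct (Mᵀ *ᵥ (crossProduct y z)) x)
        + Mᵀ *ᵥ (crossProduct (Mᵀ *ᵥ (crossProduct z x)) y) = 0 := by
  intro x y z
  have h01 : M 1 0 = M 0 1 := congrFun (congrFun hM 0) 1
  have h02 : M 2 0 = M 0 2 := congrFun (congrFun hM 0) 2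
  have h12 : M 2 1 = M 1 2 := congrFun (congrFun hM 1) 2
  rw [hM]
  funext i
  fin_cases i <;>
    simp [crossProduct, mulVec, dotProduct, Fin.sum_univ_three] <;>
    simp only [h01, h02, h12] <;> ring
end

section
/- Let N be any 2×2 real matrix and let M be the 3×3 real matrix whose upper-left 2×2 block is N and whose third row and third column are zero (M = N ⊕ 0). Then the bilinear bracket on ℝ³ defined by [x,y]_M := Mᵀ·(x ×ᵥ y) satisfies the Jacobi identity: for all x, y, z ∈ ℝ³, [[x,y]_M, z]_M + [[y,z]_M, x]_M + [[z,x]_M, y]_M = 0. (These are the class-B deformations of 𝔰𝔬(3).) -/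
open Matrix

/-- For any 2×2 real matrix `N`, let `M = N ⊕ 0` be the 3×3 matrix whose
upper-left 2×2 block is `N` and whose third row and third column vanish.  Then the
deformed bracket `[x,y]_M := Mᵀ *ᵥ (x ×ᵥ y)` satisfies the Jacobi identity
(class-B deformations of 𝔰𝔬(3)). -/
theorem classB_deformation_jacobi (N : Matrix (Fin 2) (Fin 2) ℝ)
    (M : Matrix (Fin 3) (Fin 3) ℝ)
    (hM : M = Matrix.of fun i j : Fin 3 =>
      if hi : (i : ℕ) < 2 then
        if hj : (j : ℕ) < 2 then N ⟨i, hi⟩ ⟨j, hj⟩ else 0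
      else 0) :
    ∀ x y z : Fin 3 → ℝ,
      Mᵀ *ᵥ (crossProduct (Mᵀ *ᵥ (crossProduct x y)) z)
        + Mᵀ *ᵥ (crossProduct (Mᵀ *ᵥ (crossProduct y z)) x)
        + Mᵀ *ᵥ (crossProduct (Mᵀ *ᵥ (crossProduct z x)) y) = 0 := by
  subst hM
  intro x y z
  funext i
  fin_cases i <;>
    simp [crossProduct, mulVec, dotProduct, Fin.sum_univ_succ, Matrix.of_apply] <;> ring
end

section
/- Let M be an invertible 3×3 real matrix such that the deformed bracket [x,y]_M := Mᵀ·(x ×ᵥ y) satisfies the Jacobi identity [[x,y]_M, z]_M + [[y,z]_M, x]_M + [[z,x]_M, y]_M = 0 for all x, y, z ∈ ℝ³. Then M is symmetric: Mᵀ = M. (A full-rank deformation of 𝔰𝔬(3) yields a Lie algebra only if the deformation matrix is symmetric.) -/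
open Matrix

/-- If `M` is an invertible 3×3 real matrix such that the deformed bracket
`[x,y]_M := Mᵀ *ᵥ (x ×ᵥ y)` satisfies the Jacobi identity, then `M` is symmetric. -/
theorem fullRank_jacobi_implies_symmetric (M : Matrix (Fin 3) (Fin 3) ℝ)
    (hinv : IsUnit M)
    (hJacobi : ∀ x y z : Fin 3 → ℝ,
      Mᵀ *ᵥ (crossProduct (Mᵀ *ᵥ (crossProduct x y)) z)
        + Mᵀ *ᵥ (crossProduct (Mᵀ *ᵥ (crossProduct y z)) x)
        + Mᵀ *ᵥ (crossProduct (Mᵀ *ᵥ (crossProduct z x)) y) = 0) :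
    Mᵀ = M := by
  have h := hJacobi ![1,0,0] ![0,1,0] ![0,0,1]
  rw [← mulVec_add, ← mulVec_add] at h
  have hinj : Function.Injective (Mᵀ.mulVec) :=
    mulVec_injective_iff_isUnit.2 ((isUnit_transpose M).2 hinv)
  have hv := hinj (h.trans (mulVec_zero Mᵀ).symm)
  have h0 := congrFun hv 0
  have h1 := congrFun hv 1
  have h2 := congrFun hv 2
  simp [cross_apply, mulVec, dotProduct, Fin.sum_univ_three] at h0 h1 h2
  ext i j
  fin_cases i <;> fin_cases j <;> simp [transpose_apply] <;> linarith
end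

section
/- Let M be a symmetric 3×3 real matrix and h ∈ ℝ³ a fixed vector. Let A be the matrix of the linear map v ↦ h ×ᵥ (M·v) on ℝ³ (the generator of the class-A Lie-Poisson system deformed by M, linearized around a singular equilibrium with Hamiltonian gradient h). Then the characteristic polynomial p of A is odd: p(−x) = −p(x) for all x; in particular λ is an eigenvalue of A if and only if −λ is, so the linearized spectrum has the Hamiltonian symmetry. -/
open Matrix Polynomial

/-- Let `M` be a symmetric 3×3 real matrix and `h ∈ ℝ³`.  Let `A` be the
matrix of the linear map `v ↦ h ×ᵥ (M·v)` (the generator of the class-A Lie-Poisson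
system deformed by `M`, linearized about a singular equilibrium with Hamiltonian
gradient `h`).  Then the characteristic polynomial `p` of `A` is odd, `p(-x) = -p(x)`;
in particular `λ` is an eigenvalue of `A` iff `-λ` is: the linearized spectrum has the
Hamiltonian symmetry. -/
theorem classA_linearized_spectral_symmetry (M : Matrix (Fin 3) (Fin 3) ℝ)
    (hM : Mᵀ = M) (h : Fin 3 → ℝ)
    (A : Matrix (Fin 3) (Fin 3) ℝ)
    (hA : A = LinearMap.toMatrix' ((crossProduct h).comp M.mulVecLin)) :
    (∀ x : ℝ, (A.charpoly).eval (-x) = -((A.charpoly).eval x)) ∧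
    (∀ lam : ℝ, lam ∈ spectrum ℝ A ↔ -lam ∈ spectrum ℝ A) := by
  have key : ∀ x : ℝ, (A.charpoly).eval x
      = Matrix.det (Matrix.of fun i j => (if i = j then x else 0) - A i j) := by
    intro x
    rw [Matrix.charpoly, ← Polynomial.coe_evalRingHom, RingHom.map_det]
    congr 1
    ext i j
    by_cases hij : i = j <;>
      simp [charmatrix_apply, hij, Matrix.diagonal_apply, Matrix.map_apply]
  have h01 : M 0 1 = M 1 0 := by rw [← congrFun (congrFun hM 0) 1]; rfl
  have h02 : M 0 2 = M 2 0 := by rw [← congrFun (congrFun hM 0) 2]; rfl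
  have h12 : M 1 2 = M 2 1 := by rw [← congrFun (congrFun hM 1) 2]; rfl
  have odd : ∀ x : ℝ, (A.charpoly).eval (-x) = -((A.charpoly).eval x) := by
    intro x
    rw [key, key, Matrix.det_fin_three, Matrix.det_fin_three]
    simp only [Matrix.of_apply, hA, LinearMap.toMatrix'_apply, LinearMap.comp_apply,
      Matrix.mulVecLin_apply, Matrix.mulVec_single, crossProduct]
    simp [mulVec, dotProduct, Fin.sum_univ_three, Pi.single_apply]
    rw [h01, h02, h12]
    ring
  refine ⟨odd, ?_⟩
  have hspec : ∀ lam : ℝ, lam ∈ spectrum ℝ A ↔ (A.charpoly).eval lam = 0 := by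
    intro lam
    have heq : algebraMap ℝ (Matrix (Fin 3) (Fin 3) ℝ) lam - A
        = Matrix.of fun i j => (if i = j then lam else 0) - A i j := by
      ext i j
      by_cases hij : i = j <;>
        simp [Matrix.algebraMap_matrix_apply, hij, Matrix.diagonal_apply]
    rw [spectrum.mem_iff, Matrix.isUnit_iff_isUnit_det, isUnit_iff_ne_zero, not_not, key, heq]
  intro lam
  rw [hspec, hspec, odd, neg_eq_zero]
end

section
/- Let n ≥ 1 and let c : Fin n × Fin n × Fin n → ℝ be fully antisymmetric structure constants, i.e., c changes sign under the interchange of any two of its three indices. Let h ∈ ℝⁿ and let M be a symmetric n×n real matrix. Define the matrix A by A_{j,l} = Σ_{k,m} c(j,k,m) h_k M_{m,l}. Then the characteristic polynomial p of A satisfies p(−x) = (−1)ⁿ p(x) for all x; in particular λ is an eigenvalue of A if and only if −λ is. (Linearization of a class-A Lie-Poisson system about a singular equilibrium has Hamiltonian symmetric spectra.) -/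
open Matrix Polynomial


lemma eval_cp {n : ℕ} (A : Matrix (Fin n) (Fin n) ℝ) (x : ℝ) :
    A.charpoly.eval x = ((x • (1 : Matrix (Fin n) (Fin n) ℝ)) - A).det := by
  rw [Matrix.charpoly, eval_det, matPolyEquiv_charmatrix]
  congr 1
  simp [Matrix.smul_one_eq_diagonal, Matrix.scalar_apply]

lemma det_smul_one_add_comm {n : ℕ} (B M : Matrix (Fin n) (Fin n) ℝ) (x : ℝ) :
    ((x • (1 : Matrix (Fin n) (Fin n) ℝ)) + B * M).det
      = ((x • (1 : Matrix (Fin n) (Fin n) ℝ)) + M * B).det := by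
  rcases eq_or_ne x 0 with rfl | hx
  · simpa using Matrix.det_mul_comm B M
  · have h1 : (x • (1 : Matrix (Fin n) (Fin n) ℝ)) + B * M
        = x • (1 + (x⁻¹ • B) * M) := by
      rw [smul_add, Matrix.smul_mul, smul_smul, mul_inv_cancel₀ hx, one_smul]
    have h2 : (x • (1 : Matrix (Fin n) (Fin n) ℝ)) + M * B
        = x • (1 + M * (x⁻¹ • B)) := by
      rw [smul_add, Matrix.mul_smul, smul_smul, mul_inv_cancel₀ hx, one_smul]
    rw [h1, h2, Matrix.det_smul, Matrix.det_smul, Matrix.det_one_add_mul_comm]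

/-- Let `c` be fully antisymmetric structure constants on `ℝⁿ` (changing
sign under the interchange of any two of its three indices), let `h ∈ ℝⁿ`, and let `M`
be a symmetric n×n real matrix.  The generator `A` of the linearization of the
associated class-A Lie-Poisson system about a singular equilibrium,
`A_{j,l} = Σ_{k,m} c(j,k,m) h_k M_{m,l}`, has characteristic polynomial `p` with
`p(-x) = (-1)ⁿ p(x)`; in particular `λ` is an eigenvalue of `A` iff `-λ` is. -/
theorem classA_generator_spectral_symmetry (n : ℕ) (hn : 1 ≤ n)
    (c : Fin n → Fin n → Fin n → ℝ)
    (hswap12 : ∀ j k m : Fin n, c j k m = -c k j m)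
    (hswap23 : ∀ j k m : Fin n, c j k m = -c j m k)
    (hswap13 : ∀ j k m : Fin n, c j k m = -c m k j)
    (h : Fin n → ℝ) (M : Matrix (Fin n) (Fin n) ℝ) (hM : Mᵀ = M)
    (A : Matrix (Fin n) (Fin n) ℝ)
    (hA : ∀ j l : Fin n, A j l = ∑ k : Fin n, ∑ m : Fin n, c j k m * h k * M m l) :
    (∀ x : ℝ, (A.charpoly).eval (-x) = (-1 : ℝ) ^ n * (A.charpoly).eval x) ∧
    (∀ lam : ℝ, lam ∈ spectrum ℝ A ↔ -lam ∈ spectrum ℝ A) := by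
  set B : Matrix (Fin n) (Fin n) ℝ := Matrix.of fun j m => ∑ k : Fin n, c j k m * h k with hB
  have hABM : A = B * M := by
    ext j l
    rw [hA, Matrix.mul_apply]
    simp only [hB, Matrix.of_apply, Finset.sum_mul]
    exact Finset.sum_comm
  have hBT : Bᵀ = -B := by
    ext m j
    simp only [Matrix.transpose_apply, Matrix.neg_apply, hB, Matrix.of_apply,
      ← Finset.sum_neg_distrib]
    refine Finset.sum_congr rfl fun k _ => ?_
    rw [hswap13 j k m]; ring
  have hAT : Aᵀ = -(M * B) := by
    rw [hABM, Matrix.transpose_mul, hM, hBT, Matrix.mul_neg]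
  have key : ∀ x : ℝ, (A.charpoly).eval (-x) = (-1 : ℝ) ^ n * (A.charpoly).eval x := by
    intro x
    have e1 : (A.charpoly).eval (-x)
        = (-(x • (1 : Matrix (Fin n) (Fin n) ℝ) + A)).det := by
      rw [eval_cp]; congr 1; rw [neg_add, neg_smul, sub_eq_add_neg]
    rw [e1, Matrix.det_neg, Fintype.card_fin]
    congr 1
    rw [hABM, det_smul_one_add_comm]
    have e2 : x • (1 : Matrix (Fin n) (Fin n) ℝ) + M * B
        = (x • (1 : Matrix (Fin n) (Fin n) ℝ) - A)ᵀ := by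
      rw [Matrix.transpose_sub, hAT, Matrix.transpose_smul, Matrix.transpose_one,
        sub_neg_eq_add]
    rw [e2, Matrix.det_transpose, ← eval_cp, hABM]
  refine ⟨key, fun lam => ?_⟩
  have hspec : ∀ mu : ℝ, mu ∈ spectrum ℝ A ↔ (A.charpoly).eval mu = 0 := by
    intro mu
    rw [spectrum.mem_iff, Matrix.isUnit_iff_isUnit_det, isUnit_iff_ne_zero, not_ne_iff,
      eval_cp]
    congr! 2
    simp [Algebra.algebraMap_eq_smul_one]
  rw [hspec, hspec, key]
  constructor
  · intro hz
    rw [hz, mul_zero]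
  · intro hz
    rcases mul_eq_zero.mp hz with h1 | h1
    · exact absurd h1 (pow_ne_zero n (by norm_num))
    · exact h1
end
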